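/- For any complex numbers c₀ and c₁ with c₁ ≠ 0, the four-qubit state c₀|0000⟩ + c₁(|1000⟩ + |0100⟩ + |0010⟩ + |0001⟩) is SLOCC-equivalent to the four-qubit W state |1000⟩ + |0100⟩ + |0010⟩ + |0001⟩. -/

import Mathlib

/-!
Write the state as `|0⟩ ⊗ (c₀|0…0⟩ + c₁W') + c₁|1⟩ ⊗ |0…0⟩` with respect to one qubit,
`W'` the W state of the others. Acting on that qubit alone by
`|0⟩ ↦ c₁⁻¹|0⟩`, `|1⟩ ↦ c₁⁻¹|1⟩ - c₀c₁⁻²|0⟩` (identity elsewhere) cancels the two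
`|0…0⟩` terms and leaves `|0⟩ ⊗ W' + |1⟩ ⊗ |0…0⟩ = W`. Since the coefficients of all
states involved depend only on the Hamming weight, this is a check on the weight of the
other qubits (`0`, `1` or at least `2`) and the value of the acted-on qubit.
-/

/-- The four-qubit W state: coefficient `1` on every basis vector with exactly one
index equal to `1`, and `0` elsewhere. -/
noncomputable def W4 : (Fin 4 → Fin 2) → ℂ :=
  fun f => if (Finset.univ.filter fun k => f k = 1).card = 1 then 1 else 0

open Finset Function

theorem hammingNorm_update {ι β : Type*} [Fintype ι] [DecidableEq ι] [Zero β] [DecidableEq β]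
    (x : ι → β) (i : ι) (b : β) :
    hammingNorm (update x i b) = hammingNorm (update x i 0) + if b = 0 then 0 else 1 := by
  simp only [hammingNorm, card_filter, Fintype.sum_eq_add_sum_compl i, update_self]
  have hcompl : ∀ k ∈ ({i}ᶜ : Finset ι), update x i b k = update x i 0 k := fun k hk => by
    simp_all [update_of_ne]
  rw [sum_congr rfl fun k hk => by rw [hcompl k hk]]
  by_cases hb : b = 0 <;> simp [hb, add_comm]

theorem hammingNorm_eq_card_filter_eq_one {ι : Type*} [Fintype ι] (f : ι → Fin 2) :
    hammingNorm f = #{k | f k = 1} := by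
  unfold hammingNorm
  congr 1
  ext k
  simp only [mem_filter, mem_univ, true_and]
  exact ⟨Fin.eq_one_of_ne_zero _, fun h => h ▸ one_ne_zero⟩

section LocalAction

variable {ι κ R : Type*} [Fintype ι] [DecidableEq ι] [Fintype κ] [DecidableEq κ] [CommSemiring R]

/-- The operator `⨂ₖ A k` applied to a state given by its coefficients in the product basis. -/
def localAction (A : ι → Matrix κ κ R) (ψ : (ι → κ) → R) (f : ι → κ) : R :=
  ∑ g, (∏ k, A k (f k) (g k)) * ψ g

def SLOCCEquiv (φ ψ : (ι → κ) → R) : Prop :=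
  ∃ A : ι → Matrix κ κ R, (∀ k, IsUnit (A k)) ∧ ∀ f, φ f = localAction A ψ f

omit [Fintype κ] in
theorem prod_mulSingle_apply (M : Matrix κ κ R) (i : ι) (f g : ι → κ) :
    ∏ k, (Pi.mulSingle i M : ι → Matrix κ κ R) k (f k) (g k) =
      if ∀ k ≠ i, g k = f k then M (f i) (g i) else 0 := by
  rw [Fintype.prod_eq_mul_prod_compl i, Pi.mulSingle_eq_same]
  rw [prod_congr rfl fun k hk => by
    rw [Pi.mulSingle_eq_of_ne (by simpa using hk), Matrix.one_apply]]
  simp [prod_ite_zero, eq_comm]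

theorem sum_ite_forall_ne_eq (i : ι) (F : (ι → κ) → κ → R) (f : ι → κ) :
    ∑ g, (if ∀ k ≠ i, g k = f k then F g (g i) else 0) = ∑ b, F (update f i b) b :=
  calc _ = ∑ g, ∑ b, if g = update f i b then F g (g i) else 0 :=
        sum_congr rfl fun g _ => by
          simp only [eq_update_iff, ite_and, sum_ite_eq, mem_univ, if_true]
    _ = _ := by
        rw [sum_comm]
        exact sum_congr rfl fun b _ => by simp

theorem localAction_mulSingle (M : Matrix κ κ R) (i : ι) (ψ : (ι → κ) → R) (f : ι → κ) :
    localAction (Pi.mulSingle i M) ψ f = ∑ b, M (f i) b * ψ (update f i b) := by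
  simp only [localAction, prod_mulSingle_apply, ite_mul, zero_mul]
  exact sum_ite_forall_ne_eq i (fun g b => M (f i) b * ψ g) f

end LocalAction

section WState

variable {K : Type*} [Field K] (ι : Type*) [Fintype ι]

def wState : (ι → Fin 2) → K := fun f => if hammingNorm f = 1 then 1 else 0

variable {ι}

theorem single_add_smul_wState_apply (c₀ c₁ : K) (f : ι → Fin 2) :
    (Pi.single 0 c₀ + c₁ • wState ι : (ι → Fin 2) → K) f =
      if hammingNorm f = 0 then c₀ else if hammingNorm f = 1 then c₁ else 0 := by
  by_cases h0 : hammingNorm f = 0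
  · simp [hammingNorm_eq_zero.mp h0, wState]
  · simp [h0, hammingNorm_eq_zero.not.mp h0, wState]

theorem sloccEquiv_wState_single_add_smul_wState [DecidableEq ι] (i : ι) (c₀ : K) {c₁ : K}
    (hc₁ : c₁ ≠ 0) :
    SLOCCEquiv (wState ι) (Pi.single 0 c₀ + c₁ • wState ι : (ι → Fin 2) → K) := by
  have hM : IsUnit !![c₁⁻¹, -c₀ * c₁⁻¹ ^ 2; 0, c₁⁻¹] := by
    simp [Matrix.isUnit_iff_isUnit_det, Matrix.det_fin_two_of, hc₁]
  refine ⟨Pi.mulSingle i !![c₁⁻¹, -c₀ * c₁⁻¹ ^ 2; 0, c₁⁻¹], fun k => ?_, fun f => ?_⟩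
  · by_cases hk : k = i
    · subst hk
      simpa using hM
    · simp [hk]
  rw [localAction_mulSingle, Fin.sum_univ_two]
  obtain ⟨r, hr⟩ : ∃ r, hammingNorm (update f i 0) = r := ⟨_, rfl⟩
  have hf : hammingNorm f = r + if f i = 0 then 0 else 1 := by
    rw [← hr, ← hammingNorm_update, update_eq_self]
  have h1 : hammingNorm (update f i 1) = r + 1 := by
    rw [hammingNorm_update, hr, if_neg one_ne_zero]
  simp only [single_add_smul_wState_apply, wState, hf, h1, hr]
  generalize f i = a
  fin_cases a <;> rcases r with _ | _ | r <;> simp <;> field_simp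
  ring

end WState

/-- For `c₁ ≠ 0`, the state `c₀|0000⟩ + c₁(|1000⟩ + |0100⟩ + |0010⟩ + |0001⟩)` is
SLOCC-equivalent to the four-qubit W state. -/
theorem c0_plus_c1_w4_slocc_equiv_w4 (c₀ c₁ : ℂ) (hc₁ : c₁ ≠ 0)
    (ψ : (Fin 4 → Fin 2) → ℂ)
    (hψ : ∀ f : Fin 4 → Fin 2,
      ψ f = if ∀ k, f k = 0 then c₀
        else if (Finset.univ.filter fun k => f k = 1).card = 1 then c₁ else 0) :
    ∃ A : Fin 4 → Matrix (Fin 2) (Fin 2) ℂ,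
      (∀ k, IsUnit (A k)) ∧
      ∀ f : Fin 4 → Fin 2,
        W4 f = ∑ g : Fin 4 → Fin 2, (∏ k, A k (f k) (g k)) * ψ g := by
  have hW : W4 = wState (Fin 4) :=
    funext fun f => by rw [W4, wState, hammingNorm_eq_card_filter_eq_one]
  have hψ' : ψ = Pi.single 0 c₀ + c₁ • wState (Fin 4) := funext fun f => by
    rw [hψ, single_add_smul_wState_apply]
    simp only [hammingNorm_eq_zero, funext_iff, Pi.zero_apply]
    rw [hammingNorm_eq_card_filter_eq_one]
  rw [hW, hψ']
  exact sloccEquiv_wState_single_add_smul_wState 0 c₀ hc₁
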